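/- arXiv:math/0703433 — 4 statements merged into one kernel-verified Lean document; each statement's English description precedes it below -/
import Mathlib

section
/- For every x ∈ X, the sequence fₙ(x) converges to x in the metric σ. -/
open Filter Topology
open scoped Classical

noncomputable def delegate {X : Type*} [MetricSpace X] (r : ℕ → X) : ℕ → X → X
  | 0, _ => r 0
  | n+1, x => if dist x (delegate r n x) ≤ dist x (r (n+1)) then delegate r n x else r (n+1)

noncomputable def score {X : Type*} [MetricSpace X] (r : ℕ → X) (a : ℕ → ℝ) (x y : X) : ℝ :=
  ∑' i, if delegate r i x ≠ delegate r i y then a i else 0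

lemma delegate_le_r {X : Type*} [MetricSpace X] (r : ℕ → X) (x : X) (n : ℕ) :
    dist x (delegate r n x) ≤ dist x (r n) := by
  cases n with
  | zero => simp [delegate]
  | succ n =>
      rw [delegate]
      split
      · assumption
      · exact le_rfl
      
lemma delegate_anti {X : Type*} [MetricSpace X] (r : ℕ → X) (x : X) :
    Antitone (fun n => dist x (delegate r n x)) := by
  apply antitone_nat_of_succ_le
  intro n
  simp only [delegate]
  split
  · exact le_rfl
  · next h => exact (not_le.mp h).le

theorem stmt3 {X : Type*} [MetricSpace X] (r : ℕ → X) (hr : Function.Injective r)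
    (hd : DenseRange r) (x : X) :
    Tendsto (fun n => delegate r n x) atTop (𝓝 x) := by
  rw [Metric.tendsto_atTop]
  intro ε hε
  obtain ⟨y, hy, ⟨n, rfl⟩⟩ := Metric.dense_iff.mp hd x ε hε
  refine ⟨n, fun m hm => ?_⟩
  rw [dist_comm]
  calc dist x (delegate r m x) ≤ dist x (delegate r n x) := delegate_anti r x hm
    _ ≤ dist x (r n) := delegate_le_r r x n
    _ < ε := by simpa [dist_comm] using hy
end

section
/- The scoring function ρ is a metric on X. -/
open Filter Topology
open scoped Classical

lemma delegate_min {X : Type*} [MetricSpace X] (r : ℕ → X) (x : X) :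
    ∀ n, ∀ j ≤ n, dist x (delegate r n x) ≤ dist x (r j) := by
  intro n
  induction n with
  | zero => intro j hj; interval_cases j; simp [delegate]
  | succ n ih =>
    intro j hj
    by_cases h : dist x (delegate r n x) ≤ dist x (r (n+1))
    · rw [delegate, if_pos h]
      rcases Nat.le_succ_iff.mp hj with hj' | hj'
      · exact ih j hj'
      · exact hj' ▸ h
    · rw [delegate, if_neg h]
      push_neg at h
      rcases Nat.le_succ_iff.mp hj with hj' | hj'
      · exact le_trans h.le (ih j hj')
      · exact hj' ▸ le_rfl

lemma score_summand_summable {X : Type*} [MetricSpace X] (r : ℕ → X) (a : ℕ → ℝ)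
    (ha : ∀ n, 0 < a n) (hsum : Summable a) (x y : X) :
    Summable (fun i => if delegate r i x ≠ delegate r i y then a i else 0) := by
  apply hsum.of_nonneg_of_le
  · intro i; split <;> [exact (ha i).le; exact le_rfl]
  · intro i; split <;> [exact le_rfl; exact (ha i).le]

theorem stmt8 {X : Type*} [MetricSpace X] (r : ℕ → X) (hr : Function.Injective r)
    (hd : DenseRange r) (a : ℕ → ℝ) (ha : ∀ n, 0 < a n) (hmono : Antitone a)
    (hsum : Summable a) :
    (∀ x : X, score r a x x = 0) ∧
    (∀ x y : X, score r a x y = 0 → x = y) ∧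
    (∀ x y : X, score r a x y = score r a y x) ∧
    (∀ x y z : X, score r a x z ≤ score r a x y + score r a y z) := by
  refine ⟨?_, ?_, ?_, ?_⟩
  · intro x; simp [score]
  · intro x y h
    by_contra hxy
    have hd' : 0 < dist x y := dist_pos.mpr hxy
    obtain ⟨i, hi⟩ := hd.exists_dist_lt x (by linarith : (0:ℝ) < dist x y / 4)
    obtain ⟨j, hj⟩ := hd.exists_dist_lt y (by linarith : (0:ℝ) < dist x y / 4)
    set n := max i j with hn
    have h1 : dist x (delegate r n x) < dist x y / 4 :=
      lt_of_le_of_lt (delegate_min r x n i (le_max_left _ _)) hi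
    have h2 : dist y (delegate r n y) < dist x y / 4 :=
      lt_of_le_of_lt (delegate_min r y n j (le_max_right _ _)) hj
    have hne : delegate r n x ≠ delegate r n y := by
      intro he
      have h1' : dist x (delegate r n y) < dist x y / 4 := he ▸ h1
      have := dist_triangle4 x (delegate r n y) (delegate r n y) y
      rw [dist_self] at this
      rw [dist_comm (delegate r n y) y] at this
      linarith
    have hpos : 0 < score r a x y := by
      apply Summable.tsum_pos (score_summand_summable r a ha hsum x y)
        (fun i => by split <;> [exact (ha i).le; exact le_rfl]) n
      rw [if_pos hne]; exact ha n
    linarith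
  · intro x y
    refine tsum_congr fun i => ?_
    by_cases h : delegate r i x = delegate r i y <;> simp [h, Ne, eq_comm]
  · intro x y z
    have sxz := score_summand_summable r a ha hsum x z
    have sxy := score_summand_summable r a ha hsum x y
    have syz := score_summand_summable r a ha hsum y z
    rw [score, score, score, ← Summable.tsum_add sxy syz]
    refine Summable.tsum_le_tsum (fun i => ?_) sxz (sxy.add syz)
    have n1 : (0:ℝ) ≤ if delegate r i x ≠ delegate r i y then a i else 0 := by
      split <;> [exact (ha i).le; exact le_rfl]
    have n2 : (0:ℝ) ≤ if delegate r i y ≠ delegate r i z then a i else 0 := by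
      split <;> [exact (ha i).le; exact le_rfl]
    by_cases hP : delegate r i x ≠ delegate r i z
    · rw [if_pos hP]
      by_cases h1 : delegate r i x ≠ delegate r i y
      · rw [if_pos h1]; linarith
      · push_neg at h1
        have h2 : delegate r i y ≠ delegate r i z := fun h => hP (h1.trans h)
        rw [if_neg (by simp [h1]), if_pos h2]; linarith
    · rw [if_neg hP]; linarith
end

section
/- If a sequence xᵢ converges to x in the metric ρ, then for any integer N > 0 there exists M > 0 such that fₙ(x_m) = fₙ(x) for all m ≥ M and all 1 ≤ n ≤ N. -/
open Filter Topology
open scoped Classical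

theorem stmt9 {X : Type*} [MetricSpace X] (r : ℕ → X) (hr : Function.Injective r)
    (hd : DenseRange r) (a : ℕ → ℝ) (ha : ∀ n, 0 < a n) (hmono : Antitone a)
    (hsum : Summable a) (xs : ℕ → X) (x : X)
    (hconv : Tendsto (fun i => score r a (xs i) x) atTop (𝓝 0)) (N : ℕ) :
    ∃ M : ℕ, ∀ m ≥ M, ∀ n ≤ N, delegate r n (xs m) = delegate r n x := by
  have hev : ∀ᶠ m in atTop, score r a (xs m) x < a N :=
    hconv.eventually (gt_mem_nhds (ha N))
  obtain ⟨M, hM⟩ := eventually_atTop.mp hev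
  refine ⟨M, fun m hm n hn => ?_⟩
  by_contra hne
  set f : ℕ → ℝ := fun i => if delegate r i (xs m) ≠ delegate r i x then a i else 0 with hf
  have hnonneg : ∀ i, 0 ≤ f i := by
    intro i; simp only [hf]; split <;> [exact (ha i).le; rfl]
  have hle : ∀ i, f i ≤ a i := by
    intro i; simp only [hf]; split <;> [rfl; exact (ha i).le]
  have hsf : Summable f := Summable.of_nonneg_of_le hnonneg hle hsum
  have hterm : f n = a n := by simp only [hf, if_pos hne]
  have : a n ≤ score r a (xs m) x := by
    rw [← hterm]; exact Summable.le_tsum hsf n (fun j _ => hnonneg j)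
  exact absurd (lt_of_le_of_lt (le_trans (hmono hn) this) (hM m hm)) (lt_irrefl _)
end

section
/- Each delegate function fₙ takes only finitely many values (at most n), and hence the map x ↦ (f₁(x), f₂(x), …) embeds points of X into a product of discrete-valued coordinates separating points of X. -/
open Filter Topology
open scoped Classical

lemma delegate_mem {X : Type*} [MetricSpace X] (r : ℕ → X) (n : ℕ) (x : X) :
    delegate r n x ∈ (Finset.range (n+1)).image r := by
  induction n with
  | zero => simp [delegate]
  | succ n ih =>
    rw [delegate]
    split
    · exact Finset.mem_of_subset (Finset.image_subset_image (by
        intro i hi; simp at hi ⊢; omega)) ih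
    · exact Finset.mem_image_of_mem r (Finset.self_mem_range_succ (n+1))

lemma delegate_le {X : Type*} [MetricSpace X] (r : ℕ → X) (n i : ℕ) (hi : i ≤ n) (x : X) :
    dist x (delegate r n x) ≤ dist x (r i) := by
  induction n with
  | zero => interval_cases i; simp [delegate]
  | succ n ih =>
    rw [delegate]
    split
    · rename_i h
      rcases Nat.lt_succ_iff_lt_or_eq.mp (Nat.lt_succ_of_le hi) with h' | h'
      · exact ih (Nat.lt_succ_iff.mp h')
      · subst h'; exact h
    · rename_i h
      push_neg at h
      rcases Nat.lt_succ_iff_lt_or_eq.mp (Nat.lt_succ_of_le hi) with h' | h'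
      · exact le_of_lt (lt_of_lt_of_le h (ih (Nat.lt_succ_iff.mp h')))
      · subst h'; exact le_refl _

lemma delegate_tendsto {X : Type*} [MetricSpace X] (r : ℕ → X) (hd : DenseRange r) (x : X) :
    Tendsto (fun n => delegate r n x) atTop (𝓝 x) := by
  rw [Metric.tendsto_atTop]
  intro ε hε
  obtain ⟨i, hi⟩ := Metric.denseRange_iff.mp hd x ε hε
  refine ⟨i, fun n hn => ?_⟩
  rw [dist_comm]
  exact lt_of_le_of_lt (delegate_le r n i hn x) hi

theorem stmt15 {X : Type*} [MetricSpace X] (r : ℕ → X) (hr : Function.Injective r)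
    (hd : DenseRange r) :
    (∀ n : ℕ, (Set.range (delegate r n)).Finite ∧ (Set.range (delegate r n)).ncard ≤ n + 1) ∧
    Function.Injective (fun x : X => fun n : ℕ => delegate r n x) ∧
    (∀ x y : X, x ≠ y → ∃ n : ℕ, delegate r n x ≠ delegate r n y) := by
  have hsub : ∀ n : ℕ, Set.range (delegate r n) ⊆ ↑((Finset.range (n+1)).image r) := by
    intro n z ⟨x, hx⟩
    exact hx ▸ delegate_mem r n x
  have hinj : Function.Injective (fun x : X => fun n : ℕ => delegate r n x) := by
    intro x y hxy
    have h1 := delegate_tendsto r hd x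
    have h2 := delegate_tendsto r hd y
    have : (fun n => delegate r n x) = fun n => delegate r n y := hxy
    rw [this] at h1
    exact tendsto_nhds_unique h1 h2
  refine ⟨fun n => ⟨Set.Finite.subset (Finset.finite_toSet _) (hsub n), ?_⟩, hinj, ?_⟩
  · calc Set.ncard (Set.range (delegate r n)) ≤ ((Finset.range (n+1)).image r).card := by
          rw [← Set.ncard_coe_finset]
          exact Set.ncard_le_ncard (hsub n) (Finset.finite_toSet _)
      _ ≤ (Finset.range (n+1)).card := Finset.card_image_le
      _ = n + 1 := Finset.card_range _
  · intro x y hxy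
    by_contra h
    push_neg at h
    exact hxy (hinj (funext h))
end
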